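/- arXiv:2404.04581 — 4 statements merged into one kernel-verified Lean document; each statement's English description precedes it below -/
import Mathlib

section
/- For all α, β, γ > 0, the function b(α,β,γ) := ∂₁θ_log(β,γ)·α + ∂₂θ_log(β,γ)·β − θ_log(α,β) is nonnegative. -/
open Real

noncomputable def thetaLog (r s : ℝ) : ℝ := ∫ p in (0:ℝ)..1, r ^ (1 - p) * s ^ p

noncomputable def dtheta1 (r s : ℝ) : ℝ := deriv (fun u : ℝ => thetaLog u s) r

noncomputable def dtheta2 (r s : ℝ) : ℝ := deriv (fun v : ℝ => thetaLog r v) s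

noncomputable def bfun (a b c : ℝ) : ℝ := dtheta1 b c * a + dtheta2 b c * b - thetaLog a b

noncomputable def b0fun (a b c : ℝ) : ℝ := dtheta1 b c * a + dtheta2 b c * b

/-!
For each `p ∈ [0, 1]` the integrand `f_p (r, s) = r ^ (1 - p) * s ^ p` is concave and positively
homogeneous of degree one. Its tangent plane at `(β, γ)` therefore passes through the origin and
lies above the graph, i.e. `f_p (α, β) ≤ ∂₁f_p (β, γ) α + ∂₂f_p (β, γ) β`; concretely this is the
weighted AM-GM inequality. Differentiating under the integral sign and integrating over `p`
gives `b(α, β, γ) ≥ 0`.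
-/

open Set MeasureTheory

lemma rpow_le_max_one {x p : ℝ} (hx : 0 ≤ x) (hp₀ : 0 ≤ p) (hp₁ : p ≤ 1) : x ^ p ≤ max 1 x :=
  calc x ^ p ≤ max 1 x ^ p := rpow_le_rpow hx (le_max_right 1 x) hp₀
    _ ≤ max 1 x ^ (1 : ℝ) := rpow_le_rpow_of_exponent_le (le_max_left 1 x) hp₁
    _ = max 1 x := rpow_one _

lemma rpow_sub_one_le_max_one_inv {x y q : ℝ} (hy : 0 < y) (hyx : y ≤ x) (hq₀ : 0 ≤ q)
    (hq₁ : q ≤ 1) : x ^ (q - 1) ≤ max 1 y⁻¹ := by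
  have hx : 0 < x := hy.trans_le hyx
  calc x ^ (q - 1) = x⁻¹ ^ (1 - q) := by rw [inv_rpow hx.le, ← rpow_neg hx.le, neg_sub]
    _ ≤ max 1 x⁻¹ := rpow_le_max_one (by positivity) (by linarith) (by linarith)
    _ ≤ max 1 y⁻¹ := max_le_max le_rfl (inv_anti₀ hy hyx)

lemma hasDerivAt_integral_rpow_mul {e g : ℝ → ℝ} (he : Continuous e)
    (he_mem : ∀ p ∈ Icc (0 : ℝ) 1, e p ∈ Icc (0 : ℝ) 1) (hg : Continuous g) {x₀ : ℝ}
    (hx₀ : 0 < x₀) :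
    HasDerivAt (fun x => ∫ p in (0 : ℝ)..1, x ^ e p * g p)
      (∫ p in (0 : ℝ)..1, e p * x₀ ^ (e p - 1) * g p) x₀ := by
  obtain ⟨M, hM⟩ := isCompact_Icc.exists_bound_of_continuousOn (hg.continuousOn (s := Icc 0 1))
  have h_ball : ∀ x ∈ Metric.ball x₀ (x₀ / 2), x₀ / 2 < x := fun x hx => by
    linarith [(abs_lt.1 (Metric.mem_ball.1 hx)).1]
  refine (intervalIntegral.hasDerivAt_integral_of_dominated_loc_of_deriv_le
    (F := fun x p => x ^ e p * g p) (F' := fun x p => e p * x ^ (e p - 1) * g p)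
    (bound := fun _ => max 1 (x₀ / 2)⁻¹ * M) (Metric.ball_mem_nhds x₀ (half_pos hx₀))
    (.of_forall fun x => ?_) ?_ ?_ ?_ intervalIntegrable_const ?_).2
  · exact (by fun_prop : Measurable fun p => x ^ e p * g p).aestronglyMeasurable
  · exact (by fun_prop (disch := positivity) : Continuous _).intervalIntegrable 0 1
  · exact (by fun_prop : Measurable fun p => e p * x₀ ^ (e p - 1) * g p).aestronglyMeasurable
  · refine .of_forall fun p hp x hx => ?_
    have hp' : p ∈ Icc (0 : ℝ) 1 := Ioc_subset_Icc_self (by simpa using hp)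
    obtain ⟨he₀, he₁⟩ := he_mem p hp'
    have hx' := h_ball x hx
    have hx_pos : 0 < x := (half_pos hx₀).trans hx'
    have h_rpow := rpow_sub_one_le_max_one_inv (half_pos hx₀) hx'.le he₀ he₁
    rw [norm_mul, norm_mul, Real.norm_of_nonneg he₀, Real.norm_of_nonneg (by positivity)]
    calc e p * x ^ (e p - 1) * ‖g p‖ ≤ 1 * max 1 (x₀ / 2)⁻¹ * M := by
          gcongr
          exact hM p hp'
      _ = max 1 (x₀ / 2)⁻¹ * M := by rw [one_mul]
  · refine .of_forall fun p _ x hx => ?_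
    exact (hasDerivAt_rpow_const (Or.inl (by linarith [h_ball x hx]))).mul_const _

lemma rpow_one_sub_mul_rpow_le {a b c p : ℝ} (ha : 0 ≤ a) (hb : 0 < b) (hc : 0 < c)
    (hp₀ : 0 ≤ p) (hp₁ : p ≤ 1) :
    a ^ (1 - p) * b ^ p ≤ (1 - p) * (c / b) ^ p * a + p * (b / c) ^ (1 - p) * b := by
  have h_cancel : (c / b) ^ (p * (1 - p)) * (b / c) ^ (p * (1 - p)) = 1 := by
    rw [← mul_rpow (by positivity) (by positivity), div_mul_div_comm, mul_comm c,
      div_self (by positivity), one_rpow]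
  have h_geom :
      ((c / b) ^ p * a) ^ (1 - p) * ((b / c) ^ (1 - p) * b) ^ p = a ^ (1 - p) * b ^ p := by
    rw [mul_rpow (by positivity) ha, mul_rpow (by positivity) hb.le, ← rpow_mul (by positivity),
      ← rpow_mul (by positivity), mul_comm (1 - p) p]
    linear_combination (a ^ (1 - p) * b ^ p) * h_cancel
  calc a ^ (1 - p) * b ^ p = ((c / b) ^ p * a) ^ (1 - p) * ((b / c) ^ (1 - p) * b) ^ p :=
        h_geom.symm
    _ ≤ (1 - p) * ((c / b) ^ p * a) + p * ((b / c) ^ (1 - p) * b) :=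
      geom_mean_le_arith_mean2_weighted (by linarith) hp₀ (by positivity) (by positivity) (by ring)
    _ = (1 - p) * (c / b) ^ p * a + p * (b / c) ^ (1 - p) * b := by ring

section thetaLog

variable {r s : ℝ}

lemma hasDerivAt_thetaLog_left (hr : 0 < r) (hs : 0 < s) :
    HasDerivAt (fun u => thetaLog u s) (∫ p in (0 : ℝ)..1, (1 - p) * (s / r) ^ p) r := by
  refine (hasDerivAt_integral_rpow_mul (e := fun p => 1 - p) (g := fun p => s ^ p) (by fun_prop)
    (fun p hp => ⟨by linarith [hp.2], by linarith [hp.1]⟩) (by fun_prop (disch := positivity))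
    hr).congr_deriv (intervalIntegral.integral_congr fun p _ => ?_)
  rw [div_rpow hs.le hr.le, sub_sub_cancel_left, rpow_neg hr.le]
  ring

lemma hasDerivAt_thetaLog_right (hr : 0 < r) (hs : 0 < s) :
    HasDerivAt (fun v => thetaLog r v) (∫ p in (0 : ℝ)..1, p * (r / s) ^ (1 - p)) s := by
  have h_comm : (fun v => thetaLog r v) = fun v => ∫ p in (0 : ℝ)..1, v ^ p * r ^ (1 - p) :=
    funext fun v => intervalIntegral.integral_congr fun p _ => mul_comm _ _
  rw [h_comm]
  refine (hasDerivAt_integral_rpow_mul (e := fun p => p) (g := fun p => r ^ (1 - p))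
    continuous_id (fun p hp => hp) (by fun_prop (disch := positivity)) hs).congr_deriv
    (intervalIntegral.integral_congr fun p _ => ?_)
  rw [div_rpow hr.le hs.le, ← neg_sub 1 p, rpow_neg hs.le]
  ring

end thetaLog

theorem bfun_nonneg (a b c : ℝ) (ha : 0 < a) (hb : 0 < b) (hc : 0 < c) :
    0 ≤ bfun a b c := by
  have h_int {f : ℝ → ℝ} (hf : Continuous f) : IntervalIntegrable f volume 0 1 :=
    hf.intervalIntegrable 0 1
  rw [bfun, dtheta1, dtheta2, (hasDerivAt_thetaLog_left hb hc).deriv,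
    (hasDerivAt_thetaLog_right hb hc).deriv, sub_nonneg]
  calc thetaLog a b = ∫ p in (0 : ℝ)..1, a ^ (1 - p) * b ^ p := rfl
    _ ≤ ∫ p in (0 : ℝ)..1, ((1 - p) * (c / b) ^ p * a + p * (b / c) ^ (1 - p) * b) :=
      intervalIntegral.integral_mono_on zero_le_one
        (h_int (by fun_prop (disch := positivity))) (h_int (by fun_prop (disch := positivity)))
        fun p hp => rpow_one_sub_mul_rpow_le ha.le hb hc hp.1 hp.2
    _ = (∫ p in (0 : ℝ)..1, (1 - p) * (c / b) ^ p) * a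
          + (∫ p in (0 : ℝ)..1, p * (b / c) ^ (1 - p)) * b := by
      rw [intervalIntegral.integral_add (h_int (by fun_prop (disch := positivity)))
          (h_int (by fun_prop (disch := positivity))),
        intervalIntegral.integral_mul_const, intervalIntegral.integral_mul_const]
end

section
/- For all α, β > 0, we have b(α,β,α) = b(β,α,β) and 4θ_log(α,β) + b(α,β,α) ≥ 2(α+β), where b(α,β,γ) := ∂₁θ_log(β,γ)·α + ∂₂θ_log(β,γ)·β − θ_log(α,β). -/
/-!
With `c = log a - log b` one has `θ_log(b, a) = b ∫₀¹ e^{pc} dp`, so the derivatives of `θ_log`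
are expressed through `E(c) = ∫₀¹ e^{pc} dp` and `E'(c) = ∫₀¹ p e^{pc} dp`, which equal `1` and
`1/2` at `c = 0` (the case `a = b`) and are elementary otherwise. For `a ≠ b` the symmetry becomes
a rational identity in `a`, `b`, `c`, and `4 θ_log(a, b) + b(a, b, a) - 2(a + b) = b g(c) / c²` with
`g(s) = e^{2s} + e^{-s} - (2s² - 2s + 1) e^s - (2s² + 2s + 1)`. Finally
`e^{-t} g(2t) = 2 (cosh 3t - cosh t + 4t sinh t - 8t² cosh t)`, a power series in `t²` whose
coefficients `(9ⁿ + 24n - 32n² - 1) / (2n)!` are all nonnegative.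
-/

open Real

open scoped Nat

lemma quadratic_le_nine_pow (n : ℕ) : 32 * n ^ 2 + 1 ≤ 9 ^ n + 24 * n := by
  induction n with
  | zero => norm_num
  | succ n ih => rw [pow_succ 9]; nlinarith [Nat.le_mul_self n]

lemma hasSum_mul_sinh (t : ℝ) :
    HasSum (fun n : ℕ => 2 * n * t ^ (2 * n) / (2 * n)!) (t * sinh t) := by
  refine (hasSum_nat_add_iff' 1).1 ?_
  simp only [Finset.range_one, Finset.sum_singleton, CharP.cast_eq_zero, mul_zero, zero_mul,
    zero_div, sub_zero]
  refine ((hasSum_sinh t).mul_left t).congr_fun fun n => ?_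
  rw [Nat.mul_add_one 2 n, Nat.factorial_succ]
  push_cast
  field_simp
  ring

lemma hasSum_sq_mul_cosh (t : ℝ) :
    HasSum (fun n : ℕ => 2 * n * (2 * n - 1) * t ^ (2 * n) / (2 * n)!) (t ^ 2 * cosh t) := by
  refine (hasSum_nat_add_iff' 1).1 ?_
  simp only [Finset.range_one, Finset.sum_singleton, CharP.cast_eq_zero, mul_zero, zero_mul,
    zero_div, sub_zero]
  refine ((hasSum_cosh t).mul_left (t ^ 2)).congr_fun fun n => ?_
  rw [Nat.mul_add_one 2 n, Nat.factorial_succ, Nat.factorial_succ]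
  push_cast
  field_simp
  ring

lemma cosh_add_eight_mul_sq_mul_cosh_le (t : ℝ) :
    cosh t + 8 * t ^ 2 * cosh t ≤ cosh (3 * t) + 4 * t * sinh t := by
  have h := (((hasSum_cosh (3 * t)).sub (hasSum_cosh t)).add
    ((hasSum_mul_sinh t).mul_left 4)).sub ((hasSum_sq_mul_cosh t).mul_left 8)
  have := h.nonneg fun n => by
    have hn : (32 * n ^ 2 + 1 : ℝ) ≤ 9 ^ n + 24 * n := by exact_mod_cast quadratic_le_nine_pow n
    have h3 : (3 * t) ^ (2 * n) = 9 ^ n * (t ^ 2) ^ n := by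
      rw [mul_pow, pow_mul, pow_mul]
      norm_num
    have hcoeff : 9 ^ n * (t ^ 2) ^ n / (2 * n)! - (t ^ 2) ^ n / (2 * n)! +
        4 * (2 * n * (t ^ 2) ^ n / (2 * n)!) - 8 * (2 * n * (2 * n - 1) * (t ^ 2) ^ n / (2 * n)!)
        = (9 ^ n + 24 * n - (32 * n ^ 2 + 1)) * (t ^ 2) ^ n / (2 * n)! := by ring
    rw [h3, pow_mul, hcoeff]
    exact div_nonneg (mul_nonneg (by linarith) (by positivity)) (by positivity)
  linarith

noncomputable def reducedGap (s : ℝ) : ℝ :=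
  exp (2 * s) + exp (-s) - (2 * s ^ 2 - 2 * s + 1) * exp s - (2 * s ^ 2 + 2 * s + 1)

lemma reducedGap_nonneg (s : ℝ) : 0 ≤ reducedGap s := by
  have h := cosh_add_eight_mul_sq_mul_cosh_le (s / 2)
  have hpow (k : ℕ) (x : ℝ) (hx : k * (s / 2) = x) : exp x = exp (s / 2) ^ k := by
    rw [← hx, exp_nat_mul]
  rw [cosh_eq, cosh_eq, sinh_eq, exp_neg, exp_neg, hpow 3 (3 * (s / 2)) (by norm_num)] at h
  rw [reducedGap, exp_neg, hpow 2 s (by ring), hpow 4 (2 * s) (by ring)]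
  have hy := exp_pos (s / 2)
  set y := exp (s / 2)
  have key : y ^ 4 + (y ^ 2)⁻¹ - (2 * s ^ 2 - 2 * s + 1) * y ^ 2 - (2 * s ^ 2 + 2 * s + 1) =
      2 * y * ((y ^ 3 + (y ^ 3)⁻¹) / 2 + 4 * (s / 2) * ((y - y⁻¹) / 2) -
        ((y + y⁻¹) / 2 + 8 * (s / 2) ^ 2 * ((y + y⁻¹) / 2))) := by
    field_simp
    ring
  rw [key]
  exact mul_nonneg (by positivity) (sub_nonneg.2 h)

noncomputable def expAvg (c : ℝ) : ℝ := ∫ p in (0:ℝ)..1, exp (p * c)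

noncomputable def expMoment (c : ℝ) : ℝ := ∫ p in (0:ℝ)..1, p * exp (p * c)

lemma expAvg_zero : expAvg 0 = 1 := by simp [expAvg]

lemma expMoment_zero : expMoment 0 = 1 / 2 := by simp [expMoment]

lemma expAvg_of_ne_zero {c : ℝ} (hc : c ≠ 0) : expAvg c = (exp c - 1) / c := by
  simp only [expAvg, intervalIntegral.integral_comp_mul_right (fun x => exp x) hc, zero_mul,
    one_mul, integral_exp, exp_zero, smul_eq_mul]
  ring

lemma expMoment_of_ne_zero {c : ℝ} (hc : c ≠ 0) :
    expMoment c = ((c - 1) * exp c + 1) / c ^ 2 := by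
  have hderiv (p : ℝ) :
      HasDerivAt (fun p => (p * c - 1) / c ^ 2 * exp (p * c)) (p * exp (p * c)) p := by
    refine ((((hasDerivAt_mul_const c).sub_const 1).div_const (c ^ 2)).mul
      (hasDerivAt_mul_const c).exp).congr_deriv ?_
    field_simp
    ring
  rw [expMoment, intervalIntegral.integral_eq_sub_of_hasDerivAt (fun p _ => hderiv p)
    (Continuous.intervalIntegrable (by fun_prop) _ _)]
  simp only [one_mul, zero_mul, zero_sub, exp_zero, mul_one]
  field_simp
  ring

lemma hasDerivAt_expAvg (c : ℝ) : HasDerivAt expAvg (expMoment c) c := by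
  refine (intervalIntegral.hasDerivAt_integral_of_dominated_loc_of_deriv_le
    (F' := fun x p => p * exp (p * x)) (bound := fun _ => exp (|c| + 1))
    (Metric.ball_mem_nhds c one_pos) (.of_forall fun x => by fun_prop)
    (Continuous.intervalIntegrable (by fun_prop) _ _) (by fun_prop)
    (.of_forall fun p hp x hx => ?_) intervalIntegrable_const
    (.of_forall fun p _ x _ => ?_)).2
  · rw [Set.uIoc_of_le zero_le_one] at hp
    have hx' : |x| < |c| + 1 := by
      have := abs_sub_abs_le_abs_sub x c
      rw [Metric.mem_ball, dist_eq] at hx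
      linarith
    rw [norm_mul, norm_of_nonneg hp.1.le, norm_of_nonneg (exp_nonneg _)]
    calc p * exp (p * x) ≤ 1 * exp |x| := by
          gcongr
          · exact hp.2
          · nlinarith [le_abs_self x, neg_abs_le x, hp.1, hp.2]
      _ ≤ exp (|c| + 1) := by rw [one_mul]; exact exp_le_exp.2 hx'.le
  · simpa [mul_comm] using ((hasDerivAt_id x).const_mul p).exp

lemma thetaLog_comm (r s : ℝ) : thetaLog r s = thetaLog s r := by
  have h := intervalIntegral.integral_comp_sub_left (fun p => s ^ (1 - p) * r ^ p)
    (a := 0) (b := 1) 1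
  simp only [sub_sub_cancel, sub_zero, sub_self] at h
  rw [thetaLog, thetaLog, ← h]
  exact intervalIntegral.integral_congr fun p _ => mul_comm _ _

lemma thetaLog_eq_mul_expAvg {r s : ℝ} (hr : 0 < r) (hs : 0 < s) :
    thetaLog r s = r * expAvg (log s - log r) := by
  rw [thetaLog, expAvg, ← intervalIntegral.integral_const_mul]
  refine intervalIntegral.integral_congr fun p _ => ?_
  have : r * exp (p * (log s - log r)) = exp (log r + p * (log s - log r)) := by
    rw [exp_add, exp_log hr]
  rw [this, rpow_def_of_pos hr, rpow_def_of_pos hs, ← exp_add]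
  ring_nf

lemma dtheta1_eq {r s : ℝ} (hr : 0 < r) (hs : 0 < s) :
    dtheta1 r s = expAvg (log s - log r) - expMoment (log s - log r) := by
  have hE : HasDerivAt (fun u => expAvg (log s - log u)) (expMoment (log s - log r) * -r⁻¹) r :=
    (hasDerivAt_expAvg _).comp r ((hasDerivAt_log hr.ne').const_sub _)
  have h := ((hasDerivAt_id' r).mul hE).congr_of_eventuallyEq <|
    (eventually_gt_nhds hr).mono fun u hu => thetaLog_eq_mul_expAvg hu hs
  rw [dtheta1, h.deriv]
  field_simp
  ring

lemma dtheta2_eq {r s : ℝ} (hr : 0 < r) (hs : 0 < s) :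
    dtheta2 r s = r / s * expMoment (log s - log r) := by
  have hE : HasDerivAt (fun v => expAvg (log v - log r)) (expMoment (log s - log r) * s⁻¹) s :=
    (hasDerivAt_expAvg _).comp s ((hasDerivAt_log hs.ne').sub_const _)
  have h := (hE.const_mul r).congr_of_eventuallyEq <|
    (eventually_gt_nhds hs).mono fun v hv => thetaLog_eq_mul_expAvg hr hv
  rw [dtheta2, h.deriv]
  field_simp

lemma bfun_self_eq {a b : ℝ} (ha : 0 < a) (hb : 0 < b) :
    bfun a b a =
      (a - b) * expAvg (log a - log b) + (b ^ 2 / a - a) * expMoment (log a - log b) := by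
  rw [bfun, thetaLog_comm, thetaLog_eq_mul_expAvg hb ha, dtheta1_eq hb ha, dtheta2_eq hb ha]
  field_simp
  ring

lemma log_sub_log_ne_zero {a b : ℝ} (ha : 0 < a) (hb : 0 < b) (hab : a ≠ b) :
    log a - log b ≠ 0 :=
  sub_ne_zero.2 fun h => hab (log_injOn_pos ha hb h)

lemma thetaLog_of_ne {a b : ℝ} (ha : 0 < a) (hb : 0 < b) (hab : a ≠ b) :
    thetaLog a b = (a - b) / (log a - log b) := by
  rw [thetaLog_comm, thetaLog_eq_mul_expAvg hb ha,
    expAvg_of_ne_zero (log_sub_log_ne_zero ha hb hab), exp_sub, exp_log ha, exp_log hb]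
  field_simp

lemma bfun_self_of_ne {a b : ℝ} (ha : 0 < a) (hb : 0 < b) (hab : a ≠ b) :
    bfun a b a = (a - b) ^ 2 / (b * (log a - log b)) -
      (a ^ 2 - b ^ 2) * (a * (log a - log b) - a + b) / (a * b * (log a - log b) ^ 2) := by
  have hL := log_sub_log_ne_zero ha hb hab
  rw [bfun_self_eq ha hb, expAvg_of_ne_zero hL, expMoment_of_ne_zero hL, exp_sub, exp_log ha,
    exp_log hb]
  field_simp
  ring

lemma four_mul_thetaLog_add_bfun_self {a b : ℝ} (ha : 0 < a) (hb : 0 < b) (hab : a ≠ b) :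
    4 * thetaLog a b + bfun a b a =
      2 * (a + b) + b * reducedGap (log a - log b) / (log a - log b) ^ 2 := by
  have hL := log_sub_log_ne_zero ha hb hab
  rw [thetaLog_of_ne ha hb hab, bfun_self_of_ne ha hb hab, reducedGap, two_mul (log a - log b),
    exp_add, exp_neg, exp_sub, exp_log ha, exp_log hb]
  field_simp
  ring

theorem bfun_symm_and_lower (a b : ℝ) (ha : 0 < a) (hb : 0 < b) :
    bfun a b a = bfun b a b ∧ 4 * thetaLog a b + bfun a b a ≥ 2 * (a + b) := by
  rcases eq_or_ne a b with rfl | hab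
  · refine ⟨rfl, ?_⟩
    rw [bfun_self_eq ha ha, thetaLog_eq_mul_expAvg ha ha, sub_self, expAvg_zero, expMoment_zero]
    field_simp
    linarith
  · have hL := log_sub_log_ne_zero ha hb hab
    refine ⟨?_, ?_⟩
    · rw [bfun_self_of_ne ha hb hab, bfun_self_of_ne hb ha hab.symm,
        show log b - log a = -(log a - log b) by ring]
      field_simp
      ring
    · rw [four_mul_thetaLog_add_bfun_self ha hb hab, ge_iff_le, le_add_iff_nonneg_right]
      exact div_nonneg (mul_nonneg hb.le (reducedGap_nonneg _)) (sq_nonneg _)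
end

section
/- Let π: G̃ → G be a covering map between finite graphs (a surjective graph homomorphism that restricts to a bijection from B₁(x̃) onto B₁(π(x̃)) for every vertex x̃). If a vertex x̃ of G̃ is (S)-Ricci flat, then x = π(x̃) is (S)-Ricci flat in G. -/
open SimpleGraph

/-- The closed one-ball around a vertex. -/
def closedBall {V : Type*} (G : SimpleGraph V) (x : V) : Set V :=
  {y | y = x ∨ G.Adj x y}

/-- A vertex `x` of a `d`-regular graph `G` is (S)-Ricci flat if there exist maps
`η j : B₁(x) → V` with (i) `η j y ∼ y`, (ii) `η i y ≠ η j y` for `i ≠ j`, and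
(S) `η j (η i x) = η i (η j x)`. -/
def SRicciFlat {V : Type*} (G : SimpleGraph V) (d : ℕ) (x : V) : Prop :=
  ∃ η : Fin d → V → V,
    (∀ j, ∀ y ∈ closedBall G x, G.Adj y (η j y)) ∧
    (∀ i j, i ≠ j → ∀ y ∈ closedBall G x, η i y ≠ η j y) ∧
    (∀ i j, η j (η i x) = η i (η j x))

theorem sRicciFlat_of_covering {V W : Type*} [Fintype V] [Fintype W]
    (G' : SimpleGraph V) (G : SimpleGraph W) (d : ℕ)
    [DecidableRel G'.Adj] [DecidableRel G.Adj]
    (hreg' : G'.IsRegularOfDegree d) (hreg : G.IsRegularOfDegree d)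
    (f : G' →g G) (hsurj : Function.Surjective f)
    (hcov : ∀ x : V, Set.BijOn f (closedBall G' x) (closedBall G (f x)))
    (x : V) (h : SRicciFlat G' d x) :
    SRicciFlat G d (f x) := by
  classical
  obtain ⟨η, h1, h2, h3⟩ := h
  have hx : x ∈ closedBall G' x := Or.inl rfl
  have hball : ∀ i : Fin d, η i x ∈ closedBall G' x := fun i => Or.inr (h1 i x hx)
  haveI : Nonempty V := ⟨x⟩
  set inv := Function.invFunOn f (closedBall G' x) with hinvdef
  have hmem : ∀ w ∈ closedBall G (f x), inv w ∈ closedBall G' x ∧ f (inv w) = w := by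
    intro w hw
    obtain ⟨v, hv, hfv⟩ := (hcov x).2.2 hw
    exact ⟨Function.invFunOn_mem ⟨v, hv, hfv⟩, Function.invFunOn_eq ⟨v, hv, hfv⟩⟩
  have hinj := (hcov x).2.1
  have hleft : ∀ v ∈ closedBall G' x, inv (f v) = v := fun v hv =>
    hinj.leftInvOn_invFunOn hv
  refine ⟨fun j w => if hw : w ∈ closedBall G (f x) then f (η j (inv w)) else w,
    ?_, ?_, ?_⟩
  · intro j w hw
    simp only [dif_pos hw]
    obtain ⟨hv, hfv⟩ := hmem w hw
    have := f.map_adj (h1 j (inv w) hv)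
    rwa [hfv] at this
  · intro i j hij w hw
    simp only [dif_pos hw]
    obtain ⟨hv, hfv⟩ := hmem w hw
    have hne := h2 i j hij (inv w) hv
    have hbi : η i (inv w) ∈ closedBall G' (inv w) := Or.inr (h1 i _ hv)
    have hbj : η j (inv w) ∈ closedBall G' (inv w) := Or.inr (h1 j _ hv)
    exact fun heq => hne ((hcov (inv w)).2.1 hbi hbj heq)
  · intro i j
    have hfx : f x ∈ closedBall G (f x) := Or.inl rfl
    have step1 : ∀ k : Fin d,
        (if hw : f x ∈ closedBall G (f x) then f (η k (inv (f x))) else f x)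
          = f (η k x) := by
      intro k
      rw [dif_pos hfx, hleft x hx]
    have hmemf : ∀ k : Fin d, f (η k x) ∈ closedBall G (f x) :=
      fun k => Or.inr (f.map_adj (h1 k x hx))
    have step2 : ∀ k l : Fin d,
        (if hw : f (η k x) ∈ closedBall G (f x) then f (η l (inv (f (η k x)))) else f (η k x))
          = f (η l (η k x)) := by
      intro k l
      rw [dif_pos (hmemf k), hleft _ (hball k)]
    simp only [step1, step2]
    exact congrArg f (h3 i j)
end

section
/- Let (G, c) be a mapping representation of an irreducible, reversible finite Markov chain (X, Q, π) satisfying c(δx, η) = c(x, η) for all x ∈ X and δ, η ∈ G, with |G| ≥ 2 and X connected. Then c(x,δ) = c(δ) is independent of x, c(δ) > 0 for every δ ∈ G, c(δ) = c(δ⁻¹), and π is constant on X. -/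
open Finset

/-- For a mapping representation `(G, c)` of an irreducible, reversible finite Markov chain
`(X, Q, π)` satisfying `c(δx, η) = c(x, η)` (with `|G| ≥ 2` and connectedness expressed via
irreducibility), the rates `c(x, δ)` are independent of `x` and strictly positive,
`c(δ) = c(δ⁻¹)`, and the steady state `π` is constant. -/
theorem mappingRepresentation_const {X : Type*} [Fintype X] [DecidableEq X]
    (Q : X → X → ℝ) (π : X → ℝ)
    (hQnn : ∀ x y, 0 ≤ Q x y) (hQrow : ∀ x, ∑ y, Q x y = 1)
    (hπpos : ∀ x, 0 < π x) (hπsum : ∑ x, π x = 1)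
    (hrev : ∀ x y, Q x y * π x = Q y x * π y)
    -- irreducibility: the underlying combinatorial graph is connected
    (hirr : ∀ x y : X, Relation.ReflTransGen (fun a b => a ≠ b ∧ 0 < Q a b) x y)
    -- the mapping representation
    (G : Finset (X → X)) (hG : 2 ≤ G.card)
    (c : X → (X → X) → ℝ) (hcnn : ∀ x δ, 0 ≤ c x δ)
    (inv : (X → X) → (X → X)) (hinvmem : ∀ δ ∈ G, inv δ ∈ G)
    -- (a) the Laplacian is represented by `(G, c)`
    (ha : ∀ f : X → ℝ, ∀ x,
      ∑ y, Q x y * (f y - f x) = ∑ δ ∈ G, c x δ * (f (δ x) - f x))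
    -- (b) `inv δ` is the unique inverse of `δ` in `G`
    (hb : ∀ δ ∈ G, (∀ x, 0 < c x δ → inv δ (δ x) = x) ∧
      ∀ η ∈ G, (∀ x, 0 < c x δ → η (δ x) = x) → η = inv δ)
    -- (c) the detailed-balance-type identity
    (hc : ∀ F : X → (X → X) → ℝ,
      ∑ x, ∑ δ ∈ G, F x δ * c x δ * π x = ∑ x, ∑ δ ∈ G, F (δ x) (inv δ) * c x δ * π x)
    -- condition (ii): `c(δx, η) = c(x, η)`
    (hii : ∀ x : X, ∀ δ ∈ G, ∀ η ∈ G, c (δ x) η = c x η) :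
    (∀ x y : X, ∀ δ ∈ G, c x δ = c y δ) ∧
    (∀ x : X, ∀ δ ∈ G, 0 < c x δ) ∧
    (∀ x : X, ∀ δ ∈ G, c x δ = c x (inv δ)) ∧
    (∀ x y : X, π x = π y) := by
  classical
  -- Step A: edges of the chain are realized by maps in G
  have hstep : ∀ x y : X, x ≠ y → 0 < Q x y → ∃ δ ∈ G, δ x = y := by
    intro x y hxy hQ
    by_contra h
    push_neg at h
    have H := ha (fun z => if z = y then (1:ℝ) else 0) x
    have hL : ∑ z, Q x z * ((if z = y then (1:ℝ) else 0) - (if x = y then (1:ℝ) else 0))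
        = Q x y := by
      rw [if_neg hxy, Finset.sum_eq_single y]
      · simp
      · intro b _ hb; simp [hb]
      · intro hy; exact absurd (Finset.mem_univ y) hy
    have hR : ∑ δ ∈ G, c x δ * ((if δ x = y then (1:ℝ) else 0) - (if x = y then (1:ℝ) else 0))
        = 0 := by
      refine Finset.sum_eq_zero fun δ hδ => ?_
      simp [h δ hδ, hxy]
    rw [hL, hR] at H
    exact hQ.ne' H
  -- Step B: c(·, η) is constant
  have hconst : ∀ η ∈ G, ∀ x y : X, c x η = c y η := by
    intro η hη x y
    have h := hirr x y
    induction h with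
    | refl => rfl
    | tail _ hedge ih =>
      obtain ⟨hne, hQ⟩ := hedge
      obtain ⟨δ, hδ, rfl⟩ := hstep _ _ hne hQ
      rw [ih, hii _ δ hδ η hη]
  -- Step C: positivity
  have hpos : ∀ (x : X), ∀ δ ∈ G, 0 < c x δ := by
    intro x δ hδ
    rcases (hcnn x δ).lt_or_eq with h | h
    · exact h
    exfalso
    have hzero : ∀ y, c y δ = 0 := fun y => (hconst δ hδ y x).trans h.symm
    obtain ⟨a, haG, b, hbG, hab⟩ := Finset.one_lt_card.mp hG
    have h1 := (hb δ hδ).2 a haG (fun z hz => absurd hz (by rw [hzero z]; exact lt_irrefl 0))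
    have h2 := (hb δ hδ).2 b hbG (fun z hz => absurd hz (by rw [hzero z]; exact lt_irrefl 0))
    exact hab (h1.trans h2.symm)
  -- left inverse, bijectivity, right inverse, involution
  have hli : ∀ δ ∈ G, ∀ x, inv δ (δ x) = x := fun δ hδ x => (hb δ hδ).1 x (hpos x δ hδ)
  have hbij : ∀ δ ∈ G, Function.Bijective δ := fun δ hδ =>
    Finite.injective_iff_bijective.mp (Function.LeftInverse.injective (hli δ hδ))
  have hri : ∀ δ ∈ G, ∀ y, δ (inv δ y) = y := by
    intro δ hδ y
    obtain ⟨x, rfl⟩ := (hbij δ hδ).2 y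
    rw [hli δ hδ x]
  have hinvinv : ∀ δ ∈ G, inv (inv δ) = δ := by
    intro δ hδ
    exact ((hb (inv δ) (hinvmem δ hδ)).2 δ hδ (fun x _ => hri δ hδ x)).symm
  -- key identity from (c)
  have hkey : ∀ η ∈ G, ∀ z, c z η * π z = c (η z) (inv η) * π (η z) := by
    intro η hη z
    have H := hc (fun w γ => (if w = z then (1:ℝ) else 0) * (if γ = η then (1:ℝ) else 0))
    have hL : ∑ x, ∑ δ ∈ G,
        ((if x = z then (1:ℝ) else 0) * (if δ = η then (1:ℝ) else 0)) * c x δ * π x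
        = c z η * π z := by
      rw [Finset.sum_eq_single z]
      · rw [Finset.sum_eq_single η]
        · simp
        · intro δ _ hδ; simp [hδ]
        · intro h; exact absurd hη h
      · intro b _ hb
        refine Finset.sum_eq_zero fun δ _ => ?_
        simp [hb]
      · intro hz; exact absurd (Finset.mem_univ z) hz
    have hR : ∑ x, ∑ δ ∈ G,
        ((if δ x = z then (1:ℝ) else 0) * (if inv δ = η then (1:ℝ) else 0)) * c x δ * π x
        = c (η z) (inv η) * π (η z) := by
      have hinner : ∀ x, (∑ δ ∈ G,
          ((if δ x = z then (1:ℝ) else 0) * (if inv δ = η then (1:ℝ) else 0)) * c x δ * π x)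
          = (if inv η x = z then (1:ℝ) else 0) * c x (inv η) * π x := by
        intro x
        rw [Finset.sum_eq_single (inv η)]
        · rw [if_pos (hinvinv η hη), mul_one]
        · intro δ hδ hne
          have : inv δ ≠ η := fun h =>
            hne ((hinvinv δ hδ).symm.trans (congrArg inv h))
          simp [this]
        · intro h; exact absurd (hinvmem η hη) h
      rw [Finset.sum_congr rfl (fun x _ => hinner x), Finset.sum_eq_single (η z)]
      · rw [if_pos (hli η hη z), one_mul]
      · intro b _ hb
        have : inv η b ≠ z := fun h => hb (by rw [← h, hri η hη b])
        simp [this]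
      · intro hz; exact absurd (Finset.mem_univ (η z)) hz
    rw [← hL, ← hR]
    exact H
  -- c(η) = c(inv η)
  have hcinv : ∀ η ∈ G, ∀ x, c x η = c x (inv η) := by
    intro η hη x
    have hterm : ∀ w, c x η * π w = c x (inv η) * π (η w) := by
      intro w
      have h := hkey η hη w
      rwa [hconst η hη w x, hconst (inv η) (hinvmem η hη) (η w) x] at h
    have hsum : c x η * ∑ w, π w = c x (inv η) * ∑ w, π (η w) := by
      rw [Finset.mul_sum, Finset.mul_sum]
      exact Finset.sum_congr rfl fun w _ => hterm w
    rw [hπsum, mul_one,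
      Fintype.sum_bijective η (hbij η hη) (fun w => π (η w)) π (fun w => rfl),
      hπsum, mul_one] at hsum
    exact hsum
  -- π is invariant under each map
  have hπinv : ∀ η ∈ G, ∀ w, π (η w) = π w := by
    intro η hη w
    have h := hkey η hη w
    rw [hconst (inv η) (hinvmem η hη) (η w) w, ← hcinv η hη w] at h
    exact (mul_left_cancel₀ (hpos w η hη).ne' h).symm
  refine ⟨fun x y δ hδ => hconst δ hδ x y, fun x δ hδ => hpos x δ hδ,
    fun x δ hδ => hcinv δ hδ x, ?_⟩
  intro x y
  have h := hirr x y
  induction h with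
  | refl => rfl
  | tail _ hedge ih =>
    obtain ⟨hne, hQ⟩ := hedge
    obtain ⟨δ, hδ, rfl⟩ := hstep _ _ hne hQ
    rw [ih, hπinv δ hδ]
end
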